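/- arXiv:2605.15767 — 4 statements merged into one kernel-verified Lean document; each statement's English description precedes it below -/
import Mathlib

section
/- Let ω_x, ω_v ∈ ℝ satisfy ω_x ≠ 0, ω_v ≠ 0, ω_x ≠ ω_v and ω_x ≠ −ω_v, and let c ∈ ℝ. Define G : ℝ² → ℝ by G(a,b) = c·[ sin(2a)/(8 ω_x) + sin(2b)/(8 ω_v) − sin(2(a−b))/(16 (ω_x − ω_v)) − sin(2(a+b))/(16 (ω_x + ω_v)) ]. Then for all (a,b) ∈ ℝ², ω_x · ∂G/∂a (a,b) + ω_v · ∂G/∂b (a,b) = c·(1/4 − sin²a · sin²b). -/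
/-!
Expand the perturbation in Fourier modes: `sin² a sin² b` is `1/4` minus a combination of
`cos 2a`, `cos 2b`, `cos 2(a - b)` and `cos 2(a + b)`. The transport operator
`ωx ∂_a + ωv ∂_b` maps `sin 2(p a + q b)` to `2 (p ωx + q ωv) cos 2(p a + q b)`, so each
mode is inverted by dividing by its frequency `p ωx + q ωv`, which is nonzero for the four
modes `(p, q) = (1, 0), (0, 1), (1, -1), (1, 1)` exactly under the nonresonance conditions.
-/

open Real

theorem sin_sq_mul_sin_sq (a b : ℝ) :
    sin a ^ 2 * sin b ^ 2
      = (1 - cos (2 * a) - cos (2 * b) + (cos (2 * (a - b)) + cos (2 * (a + b))) / 2) / 4 := by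
  rw [mul_sub, mul_add, cos_sub, cos_add, cos_two_mul, cos_two_mul, sin_two_mul, sin_two_mul,
    cos_sq', cos_sq']
  ring

noncomputable def homologicalGenerator (ωx ωv c a b : ℝ) : ℝ :=
  c * (sin (2 * a) / (8 * ωx) + sin (2 * b) / (8 * ωv)
    - sin (2 * (a - b)) / (16 * (ωx - ωv)) - sin (2 * (a + b)) / (16 * (ωx + ωv)))

section

variable (ωx ωv c : ℝ)

theorem hasDerivAt_homologicalGenerator_left (a b : ℝ) :
    HasDerivAt (fun a' => homologicalGenerator ωx ωv c a' b)
      (c * (cos (2 * a) / (4 * ωx) - cos (2 * (a - b)) / (8 * (ωx - ωv))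
        - cos (2 * (a + b)) / (8 * (ωx + ωv)))) a := by
  have h₁ := ((hasDerivAt_id' a).const_mul 2).sin
  have h₂ := (((hasDerivAt_id' a).sub_const b).const_mul 2).sin
  have h₃ := (((hasDerivAt_id' a).add_const b).const_mul 2).sin
  refine ((((h₁.div_const (8 * ωx)).add_const (sin (2 * b) / (8 * ωv))).sub
    (h₂.div_const (16 * (ωx - ωv)))).sub (h₃.div_const (16 * (ωx + ωv)))).const_mul c
    |>.congr_deriv ?_
  field_simp
  ring

theorem hasDerivAt_homologicalGenerator_right (a b : ℝ) :
    HasDerivAt (fun b' => homologicalGenerator ωx ωv c a b')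
      (c * (cos (2 * b) / (4 * ωv) + cos (2 * (a - b)) / (8 * (ωx - ωv))
        - cos (2 * (a + b)) / (8 * (ωx + ωv)))) b := by
  have h₁ := ((hasDerivAt_id' b).const_mul 2).sin
  have h₂ := (((hasDerivAt_id' b).const_sub a).const_mul 2).sin
  have h₃ := (((hasDerivAt_id' b).const_add a).const_mul 2).sin
  refine ((((h₁.div_const (8 * ωv)).const_add (sin (2 * a) / (8 * ωx))).sub
    (h₂.div_const (16 * (ωx - ωv)))).sub (h₃.div_const (16 * (ωx + ωv)))).const_mul c
    |>.congr_deriv ?_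
  field_simp
  ring

end

theorem transport_homologicalGenerator {ωx ωv : ℝ} (c : ℝ) (hωx : ωx ≠ 0) (hωv : ωv ≠ 0)
    (h1 : ωx ≠ ωv) (h2 : ωx ≠ -ωv) (a b : ℝ) :
    ωx * (c * (cos (2 * a) / (4 * ωx) - cos (2 * (a - b)) / (8 * (ωx - ωv))
        - cos (2 * (a + b)) / (8 * (ωx + ωv))))
      + ωv * (c * (cos (2 * b) / (4 * ωv) + cos (2 * (a - b)) / (8 * (ωx - ωv))
        - cos (2 * (a + b)) / (8 * (ωx + ωv))))
      = c * (1 / 4 - sin a ^ 2 * sin b ^ 2) := by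
  have hsub : ωx - ωv ≠ 0 := sub_ne_zero.mpr h1
  have hadd : ωx + ωv ≠ 0 := by rwa [← sub_neg_eq_add, sub_ne_zero]
  rw [sin_sq_mul_sin_sq]
  field_simp
  ring

/-- The generating function G solves the first-order homological equation
ωx ∂G/∂a + ωv ∂G/∂b = c (1/4 − sin²a sin²b) under the nonresonance conditions. -/
theorem homological_equation_solution
    (ωx ωv : ℝ) (hωx : ωx ≠ 0) (hωv : ωv ≠ 0) (h1 : ωx ≠ ωv) (h2 : ωx ≠ -ωv)
    (c : ℝ)
    (G : ℝ → ℝ → ℝ)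
    (hG : ∀ a b : ℝ, G a b =
      c * (Real.sin (2 * a) / (8 * ωx) + Real.sin (2 * b) / (8 * ωv)
        - Real.sin (2 * (a - b)) / (16 * (ωx - ωv))
        - Real.sin (2 * (a + b)) / (16 * (ωx + ωv)))) :
    ∀ a b : ℝ,
      ωx * deriv (fun a' => G a' b) a + ωv * deriv (fun b' => G a b') b
        = c * (1 / 4 - Real.sin a ^ 2 * Real.sin b ^ 2) := by
  obtain rfl : G = homologicalGenerator ωx ωv c := funext fun a => funext (hG a)
  intro a b
  rw [(hasDerivAt_homologicalGenerator_left ωx ωv c a b).deriv,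
    (hasDerivAt_homologicalGenerator_right ωx ωv c a b).deriv]
  exact transport_homologicalGenerator c hωx hωv h1 h2 a b
end

section
/- Let K_x, K_v, M_x, M_v > 0, set ω_x = K_x/M_x, ω_v = K_v/M_v, and assume ω_x ≠ 0, ω_v ≠ 0, ω_x ≠ ω_v, ω_x ≠ −ω_v. Fix actions I'_x, I'_v ∈ ℝ, set c = 2 I'_x I'_v/(K_x K_v), and let G : ℝ² → ℝ be G(θ_x,θ_v) = c·[ sin(2θ_x)/(8ω_x) + sin(2θ_v)/(8ω_v) − sin(2(θ_x−θ_v))/(16(ω_x−ω_v)) − sin(2(θ_x+θ_v))/(16(ω_x+ω_v)) ]. Write f(J_x, J_v, θ_x, θ_v) = (2 J_x J_v/(K_x K_v)) sin²θ_x sin²θ_v. Then for all ε ∈ ℝ and all θ_x, θ_v ∈ ℝ: ω_x·(I'_x + ε ∂_{θ_x}G) + ω_v·(I'_v + ε ∂_{θ_v}G) + ε·f(I'_x + ε ∂_{θ_x}G, I'_v + ε ∂_{θ_v}G, θ_x, θ_v) = ω_x I'_x + ω_v I'_v + ε·I'_x I'_v/(2 K_x K_v) + ε²·(2/(K_x K_v))·sin²θ_x·sin²θ_v·(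 I'_x ∂_{θ_v}G + I'_v ∂_{θ_x}G + ε ∂_{θ_x}G · ∂_{θ_v}G ). -/
/-!
Subtracting the mean `1/4` from `sin² a sin² b` leaves the four Fourier modes `cos 2a`, `cos 2b`,
`cos 2(a - b)`, `cos 2(a + b)`. Dividing each by its frequency under `ω_x ∂_a + ω_v ∂_b` (possible
exactly under the nonresonance conditions) gives the generator `G`, which solves the homological
equation `ω_x ∂_a G + ω_v ∂_b G = ⟨f⟩ - f`. Hence at order `ε` only the mean
`⟨f⟩ = I'_x I'_v / (2 K_x K_v)` survives, and the remaining terms are all of order `ε²`.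
-/

open Real

lemma sin_sq_mul_sin_sq_eq_fourier (a b : ℝ) :
    sin a ^ 2 * sin b ^ 2 = 1 / 4 - (cos (2 * a) + cos (2 * b)) / 4
      + (cos (2 * (a - b)) + cos (2 * (a + b))) / 8 := by
  rw [mul_sub, mul_add, cos_sub, cos_add, cos_two_mul, cos_two_mul, cos_sq', cos_sq']
  ring

namespace KAM

variable (ωx ωv : ℝ)

noncomputable def generator (a b : ℝ) : ℝ :=
  sin (2 * a) / (8 * ωx) + sin (2 * b) / (8 * ωv)
    - sin (2 * (a - b)) / (16 * (ωx - ωv)) - sin (2 * (a + b)) / (16 * (ωx + ωv))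

lemma hasDerivAt_generator_fst (a b : ℝ) :
    HasDerivAt (fun a => generator ωx ωv a b)
      (2 * cos (2 * a) / (8 * ωx) - 2 * cos (2 * (a - b)) / (16 * (ωx - ωv))
        - 2 * cos (2 * (a + b)) / (16 * (ωx + ωv))) a := by
  have hsin (k : ℝ) : HasDerivAt (fun a : ℝ => sin (2 * (a + k))) (2 * cos (2 * (a + k))) a := by
    simpa [mul_comm] using (((hasDerivAt_id a).add_const k).const_mul 2).sin
  have h := (((((hsin 0).div_const (8 * ωx)).add_const (sin (2 * b) / (8 * ωv))).sub
    ((hsin (-b)).div_const (16 * (ωx - ωv)))).sub ((hsin b).div_const (16 * (ωx + ωv))))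
  simp only [add_zero, ← sub_eq_add_neg] at h
  exact h

lemma hasDerivAt_generator_snd (a b : ℝ) :
    HasDerivAt (fun b => generator ωx ωv a b)
      (2 * cos (2 * b) / (8 * ωv) - (-2 * cos (2 * (a - b))) / (16 * (ωx - ωv))
        - 2 * cos (2 * (a + b)) / (16 * (ωx + ωv))) b := by
  have hsin (m k : ℝ) : HasDerivAt (fun b : ℝ => sin (2 * (k + m * b)))
      (2 * m * cos (2 * (k + m * b))) b := by
    simpa [mul_comm, mul_left_comm] using
      ((((hasDerivAt_id b).const_mul m).const_add k).const_mul 2).sin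
  have h := (((((hsin 1 0).div_const (8 * ωv)).const_add (sin (2 * a) / (8 * ωx))).sub
    ((hsin (-1) a).div_const (16 * (ωx - ωv)))).sub ((hsin 1 a).div_const (16 * (ωx + ωv))))
  simp only [zero_add, one_mul, mul_one, neg_one_mul, ← sub_eq_add_neg, mul_neg] at h
  exact h

theorem generator_solves_homological_equation (hωx : ωx ≠ 0) (hωv : ωv ≠ 0) (hres : ωx ≠ ωv)
    (hres' : ωx ≠ -ωv) (a b : ℝ) :
    ωx * deriv (fun a => generator ωx ωv a b) a + ωv * deriv (fun b => generator ωx ωv a b) b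
      = 1 / 4 - sin a ^ 2 * sin b ^ 2 := by
  have hsub : ωx - ωv ≠ 0 := sub_ne_zero.mpr hres
  have hadd : ωx + ωv ≠ 0 := fun h => hres' (eq_neg_of_add_eq_zero_left h)
  rw [(hasDerivAt_generator_fst ωx ωv a b).deriv, (hasDerivAt_generator_snd ωx ωv a b).deriv,
    sin_sq_mul_sin_sq_eq_fourier]
  field_simp
  ring

end KAM

theorem kam_first_order_normal_form_general
    (Kx Kv : ℝ)
    (ωx ωv : ℝ)
    (hωx : ωx ≠ 0) (hωv : ωv ≠ 0) (h1 : ωx ≠ ωv) (h2 : ωx ≠ -ωv)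
    (Ix' Iv' : ℝ) (c : ℝ) (hc : c = 2 * Ix' * Iv' / (Kx * Kv))
    (G : ℝ → ℝ → ℝ)
    (hG : ∀ a b : ℝ, G a b =
      c * (Real.sin (2 * a) / (8 * ωx) + Real.sin (2 * b) / (8 * ωv)
        - Real.sin (2 * (a - b)) / (16 * (ωx - ωv))
        - Real.sin (2 * (a + b)) / (16 * (ωx + ωv))))
    (f : ℝ → ℝ → ℝ → ℝ → ℝ)
    (hf : ∀ Jx Jv a b : ℝ, f Jx Jv a b =
      (2 * Jx * Jv / (Kx * Kv)) * Real.sin a ^ 2 * Real.sin b ^ 2) :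
    ∀ ε θx θv : ℝ,
      ωx * (Ix' + ε * deriv (fun a => G a θv) θx)
        + ωv * (Iv' + ε * deriv (fun b => G θx b) θv)
        + ε * f (Ix' + ε * deriv (fun a => G a θv) θx)
                (Iv' + ε * deriv (fun b => G θx b) θv) θx θv
      = ωx * Ix' + ωv * Iv' + ε * (Ix' * Iv' / (2 * Kx * Kv))
        + ε ^ 2 * (2 / (Kx * Kv)) * Real.sin θx ^ 2 * Real.sin θv ^ 2 *
            (Ix' * deriv (fun b => G θx b) θv + Iv' * deriv (fun a => G a θv) θx
              + ε * deriv (fun a => G a θv) θx * deriv (fun b => G θx b) θv) := by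
  intro ε θx θv
  obtain rfl : G = fun a b => c * KAM.generator ωx ωv a b := funext₂ hG
  have hgx : deriv (fun a => c * KAM.generator ωx ωv a θv) θx
      = c * deriv (fun a => KAM.generator ωx ωv a θv) θx :=
    deriv_const_mul c (KAM.hasDerivAt_generator_fst ωx ωv θx θv).differentiableAt
  have hgv : deriv (fun b => c * KAM.generator ωx ωv θx b) θv
      = c * deriv (fun b => KAM.generator ωx ωv θx b) θv :=
    deriv_const_mul c (KAM.hasDerivAt_generator_snd ωx ωv θx θv).differentiableAt
  have homological := KAM.generator_solves_homological_equation ωx ωv hωx hωv h1 h2 θx θv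
  rw [hf, hgx, hgv]
  subst hc
  linear_combination ε * (2 * Ix' * Iv' / (Kx * Kv)) * homological

/-- Exact first-order KAM normal-form computation for the market Hamiltonian:
after the type-II canonical transformation generated by S = I'x θx + I'v θv + ε G,
the Hamiltonian equals ωx I'x + ωv I'v + ε I'x I'v/(2 Kx Kv) plus an explicit
remainder of order ε². -/
theorem kam_first_order_normal_form
    (Kx Kv Mx Mv : ℝ) (hKx : 0 < Kx) (hKv : 0 < Kv) (hMx : 0 < Mx) (hMv : 0 < Mv)
    (ωx ωv : ℝ) (hωxdef : ωx = Kx / Mx) (hωvdef : ωv = Kv / Mv)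
    (hωx : ωx ≠ 0) (hωv : ωv ≠ 0) (h1 : ωx ≠ ωv) (h2 : ωx ≠ -ωv)
    (Ix' Iv' : ℝ) (c : ℝ) (hc : c = 2 * Ix' * Iv' / (Kx * Kv))
    (G : ℝ → ℝ → ℝ)
    (hG : ∀ a b : ℝ, G a b =
      c * (Real.sin (2 * a) / (8 * ωx) + Real.sin (2 * b) / (8 * ωv)
        - Real.sin (2 * (a - b)) / (16 * (ωx - ωv))
        - Real.sin (2 * (a + b)) / (16 * (ωx + ωv))))
    (f : ℝ → ℝ → ℝ → ℝ → ℝ)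
    (hf : ∀ Jx Jv a b : ℝ, f Jx Jv a b =
      (2 * Jx * Jv / (Kx * Kv)) * Real.sin a ^ 2 * Real.sin b ^ 2) :
    ∀ ε θx θv : ℝ,
      ωx * (Ix' + ε * deriv (fun a => G a θv) θx)
        + ωv * (Iv' + ε * deriv (fun b => G θx b) θv)
        + ε * f (Ix' + ε * deriv (fun a => G a θv) θx)
                (Iv' + ε * deriv (fun b => G θx b) θv) θx θv
      = ωx * Ix' + ωv * Iv' + ε * (Ix' * Iv' / (2 * Kx * Kv))
        + ε ^ 2 * (2 / (Kx * Kv)) * Real.sin θx ^ 2 * Real.sin θv ^ 2 *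
            (Ix' * deriv (fun b => G θx b) θv + Iv' * deriv (fun a => G a θv) θx
              + ε * deriv (fun a => G a θv) θx * deriv (fun b => G θx b) θv) :=
  kam_first_order_normal_form_general Kx Kv ωx ωv hωx hωv h1 h2 Ix' Iv' c hc G hG f hf
end

section
/- Let M_x, M_u > 0, K_x, ε, x₀ ∈ ℝ. Suppose x, v : ℝ → ℝ are twice differentiable, x(t) ≠ 0 for all t, and for all t: (M_x + M_u v²)·ẍ + 2 M_u ẋ v v̇ + M_u x v v̈ + K_x (x − x₀) + ε v² x = 0 and M_u x² v̈ + 2 M_u x ẋ v̇ + M_u x ẍ v + ε v x² = 0. Then for all t: ẍ + (K_x/M_x)(x − x₀) = 0, and v̈ + 2(ẋ/x)·v̇ + ( ε/M_u − K_x(x − x₀)/(M_x x) )·v = 0. -/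
/-!
The equations are pointwise algebraic identities in `x, ẋ, ẍ, v, v̇, v̈`. Subtracting `v` times the
second equation from `x` times the first cancels every coupling term and leaves
`x (M_x ẍ + K_x (x - x₀)) = 0`, while the second equation is `x` times
`M_u x v̈ + 2 M_u ẋ v̇ + M_u ẍ v + ε v x`. Since `x ≠ 0`, both brackets vanish; dividing the
first by `M_x` gives the price oscillator, and substituting `ẍ` from it into the second,
then dividing by `M_u x`, gives the inventory oscillator.
-/

section EulerLagrangeAlgebra

variable {K : Type*} [Field K] {Mx Mu Kx ε x0 x x' x'' v v' v'' : K}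

theorem price_force_balance (hx : x ≠ 0)
    (h1 : (Mx + Mu * v ^ 2) * x'' + 2 * Mu * x' * v * v' + Mu * x * v * v''
      + Kx * (x - x0) + ε * v ^ 2 * x = 0)
    (h2 : Mu * x ^ 2 * v'' + 2 * Mu * x * x' * v' + Mu * x * x'' * v + ε * v * x ^ 2 = 0) :
    Mx * x'' + Kx * (x - x0) = 0 := by
  have h : x * (Mx * x'' + Kx * (x - x0)) = 0 := by linear_combination x * h1 - v * h2
  exact (mul_eq_zero.mp h).resolve_left hx

theorem inventory_force_balance (hx : x ≠ 0)
    (h2 : Mu * x ^ 2 * v'' + 2 * Mu * x * x' * v' + Mu * x * x'' * v + ε * v * x ^ 2 = 0) :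
    Mu * x * v'' + 2 * Mu * x' * v' + Mu * x'' * v + ε * v * x = 0 := by
  have h : x * (Mu * x * v'' + 2 * Mu * x' * v' + Mu * x'' * v + ε * v * x) = 0 := by
    linear_combination h2
  exact (mul_eq_zero.mp h).resolve_left hx

theorem price_oscillator (hMx : Mx ≠ 0) (hbal : Mx * x'' + Kx * (x - x0) = 0) :
    x'' + Kx / Mx * (x - x0) = 0 := by
  field_simp
  linear_combination hbal

theorem inventory_oscillator (hMx : Mx ≠ 0) (hMu : Mu ≠ 0) (hx : x ≠ 0)
    (hprice : Mx * x'' + Kx * (x - x0) = 0)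
    (hinv : Mu * x * v'' + 2 * Mu * x' * v' + Mu * x'' * v + ε * v * x = 0) :
    v'' + 2 * (x' / x) * v' + (ε / Mu - Kx * (x - x0) / (Mx * x)) * v = 0 := by
  field_simp
  linear_combination Mx * hinv - Mu * v * hprice

end EulerLagrangeAlgebra

theorem dynamic_euler_lagrange_decoupled_general
    (Mx Mu Kx ε x0 : ℝ) (hMx : 0 < Mx) (hMu : 0 < Mu)
    (x v : ℝ → ℝ)
    (hx0 : ∀ t, x t ≠ 0)
    (h1 : ∀ t, (Mx + Mu * v t ^ 2) * deriv (deriv x) t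
          + 2 * Mu * deriv x t * v t * deriv v t
          + Mu * x t * v t * deriv (deriv v) t
          + Kx * (x t - x0) + ε * v t ^ 2 * x t = 0)
    (h2 : ∀ t, Mu * x t ^ 2 * deriv (deriv v) t
          + 2 * Mu * x t * deriv x t * deriv v t
          + Mu * x t * deriv (deriv x) t * v t
          + ε * v t * x t ^ 2 = 0) :
    ∀ t, deriv (deriv x) t + (Kx / Mx) * (x t - x0) = 0
      ∧ deriv (deriv v) t + 2 * (deriv x t / x t) * deriv v t
          + (ε / Mu - Kx * (x t - x0) / (Mx * x t)) * v t = 0 := by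
  intro t
  have hprice := price_force_balance (hx0 t) (h1 t) (h2 t)
  have hinv := inventory_force_balance (hx0 t) (h2 t)
  exact ⟨price_oscillator hMx.ne' hprice,
    inventory_oscillator hMx.ne' hMu.ne' (hx0 t) hprice hinv⟩

/-- In the dynamic risk-aversion model, the coupled Euler–Lagrange equations imply
that the price is a harmonic oscillator about x₀ and the inventory satisfies a
damped oscillator equation with price-driven damping and stiffness. -/
theorem dynamic_euler_lagrange_decoupled
    (Mx Mu Kx ε x0 : ℝ) (hMx : 0 < Mx) (hMu : 0 < Mu)
    (x v : ℝ → ℝ)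
    (hx : Differentiable ℝ x) (hx' : Differentiable ℝ (deriv x))
    (hv : Differentiable ℝ v) (hv' : Differentiable ℝ (deriv v))
    (hx0 : ∀ t, x t ≠ 0)
    (h1 : ∀ t, (Mx + Mu * v t ^ 2) * deriv (deriv x) t
          + 2 * Mu * deriv x t * v t * deriv v t
          + Mu * x t * v t * deriv (deriv v) t
          + Kx * (x t - x0) + ε * v t ^ 2 * x t = 0)
    (h2 : ∀ t, Mu * x t ^ 2 * deriv (deriv v) t
          + 2 * Mu * x t * deriv x t * deriv v t
          + Mu * x t * deriv (deriv x) t * v t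
          + ε * v t * x t ^ 2 = 0) :
    ∀ t, deriv (deriv x) t + (Kx / Mx) * (x t - x0) = 0
      ∧ deriv (deriv v) t + 2 * (deriv x t / x t) * deriv v t
          + (ε / Mu - Kx * (x t - x0) / (Mx * x t)) * v t = 0 :=
  dynamic_euler_lagrange_decoupled_general Mx Mu Kx ε x0 hMx hMu x v hx0 h1 h2
end

section
/- Let M_x, M_u > 0, K_x, ε, x₀ ∈ ℝ, and let f : ℝ → ℝ be differentiable. Suppose x, v : ℝ → ℝ are twice differentiable, x(t) ≠ 0 for all t, and for all t: (M_x + M_u v²)·ẍ + 2 M_u ẋ v v̇ + M_u x v v̈ + K_x(x − x₀) + ε v² x = 0 and M_u x² v̈ + 2 M_u x ẋ v̇ + M_u x ẍ v + ε v x² + f'(v) = 0. Then for all t: M_x·ẍ + K_x(x − x₀) = (v/x)·f'(v), and v̈ + 2(ẋ/x)·v̇ + ( ε/M_u − K_x(x − x₀)/(M_x x) )·v + (f'(v)/(M_u x²))·(1 + M_u v²/M_x) = 0. -/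
/-!
Multiplying the Euler–Lagrange equation of `x` by `x` and subtracting `v` times that of `v`
cancels every term carrying the mass `M_u`, because all of them come from the kinetic energy of the
single coordinate `u = x v`; what remains is `x (M_x ẍ + K_x (x - x₀)) = v f'(v)`. Dividing the
equation of `v` by `M_u x²` and eliminating `ẍ` with this relation gives the inventory equation.
-/

section

variable {K : Type*} [Field K] {Mx Mu Kx ε x0 x x' x'' v v' v'' F : K}

theorem price_oscillator_of_euler_lagrange (hx : x ≠ 0)
    (h1 : (Mx + Mu * v ^ 2) * x'' + 2 * Mu * x' * v * v' + Mu * x * v * v''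
      + Kx * (x - x0) + ε * v ^ 2 * x = 0)
    (h2 : Mu * x ^ 2 * v'' + 2 * Mu * x * x' * v' + Mu * x * x'' * v + ε * v * x ^ 2 + F = 0) :
    Mx * x'' + Kx * (x - x0) = v / x * F := by
  field_simp
  linear_combination x * h1 - v * h2

theorem inventory_equation_of_price_oscillator (hMx : Mx ≠ 0) (hMu : Mu ≠ 0) (hx : x ≠ 0)
    (h2 : Mu * x ^ 2 * v'' + 2 * Mu * x * x' * v' + Mu * x * x'' * v + ε * v * x ^ 2 + F = 0)
    (hprice : Mx * x'' + Kx * (x - x0) = v / x * F) :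
    v'' + 2 * (x' / x) * v' + (ε / Mu - Kx * (x - x0) / (Mx * x)) * v
      + F / (Mu * x ^ 2) * (1 + Mu * v ^ 2 / Mx) = 0 := by
  field_simp at hprice ⊢
  linear_combination Mx * h2 - Mu * v * hprice

end

theorem limited_depth_euler_lagrange_general
    (Mx Mu Kx ε x0 : ℝ) (hMx : 0 < Mx) (hMu : 0 < Mu)
    (f : ℝ → ℝ)
    (x v : ℝ → ℝ)
    (hx0 : ∀ t, x t ≠ 0)
    (h1 : ∀ t, (Mx + Mu * v t ^ 2) * deriv (deriv x) t
          + 2 * Mu * deriv x t * v t * deriv v t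
          + Mu * x t * v t * deriv (deriv v) t
          + Kx * (x t - x0) + ε * v t ^ 2 * x t = 0)
    (h2 : ∀ t, Mu * x t ^ 2 * deriv (deriv v) t
          + 2 * Mu * x t * deriv x t * deriv v t
          + Mu * x t * deriv (deriv x) t * v t
          + ε * v t * x t ^ 2 + deriv f (v t) = 0) :
    ∀ t, Mx * deriv (deriv x) t + Kx * (x t - x0) = (v t / x t) * deriv f (v t)
      ∧ deriv (deriv v) t + 2 * (deriv x t / x t) * deriv v t
          + (ε / Mu - Kx * (x t - x0) / (Mx * x t)) * v t
          + (deriv f (v t) / (Mu * x t ^ 2)) * (1 + Mu * v t ^ 2 / Mx) = 0 := by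
  intro t
  have hprice := price_oscillator_of_euler_lagrange (hx0 t) (h1 t) (h2 t)
  exact ⟨hprice,
    inventory_equation_of_price_oscillator hMx.ne' hMu.ne' (hx0 t) (h2 t) hprice⟩

/-- Limited market depth: the coupled Euler–Lagrange equations imply the price is a
driven harmonic oscillator with driving force (v/x)f'(v), and the inventory obeys a
damped oscillator equation with an extra constraint term. -/
theorem limited_depth_euler_lagrange
    (Mx Mu Kx ε x0 : ℝ) (hMx : 0 < Mx) (hMu : 0 < Mu)
    (f : ℝ → ℝ) (hf : Differentiable ℝ f)
    (x v : ℝ → ℝ)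
    (hx : Differentiable ℝ x) (hx' : Differentiable ℝ (deriv x))
    (hv : Differentiable ℝ v) (hv' : Differentiable ℝ (deriv v))
    (hx0 : ∀ t, x t ≠ 0)
    (h1 : ∀ t, (Mx + Mu * v t ^ 2) * deriv (deriv x) t
          + 2 * Mu * deriv x t * v t * deriv v t
          + Mu * x t * v t * deriv (deriv v) t
          + Kx * (x t - x0) + ε * v t ^ 2 * x t = 0)
    (h2 : ∀ t, Mu * x t ^ 2 * deriv (deriv v) t
          + 2 * Mu * x t * deriv x t * deriv v t
          + Mu * x t * deriv (deriv x) t * v t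
          + ε * v t * x t ^ 2 + deriv f (v t) = 0) :
    ∀ t, Mx * deriv (deriv x) t + Kx * (x t - x0) = (v t / x t) * deriv f (v t)
      ∧ deriv (deriv v) t + 2 * (deriv x t / x t) * deriv v t
          + (ε / Mu - Kx * (x t - x0) / (Mx * x t)) * v t
          + (deriv f (v t) / (Mu * x t ^ 2)) * (1 + Mu * v t ^ 2 / Mx) = 0 :=
  limited_depth_euler_lagrange_general Mx Mu Kx ε x0 hMx hMu f x v hx0 h1 h2
end
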